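/- arXiv:1809.00271 — 4 statements merged into one kernel-verified Lean document; each statement's English description precedes it below -/
import Mathlib

section
/- For any f, g ∈ 𝒜 and m, n ∈ ℤ, the local functional of the residue of the commutator vanishes: res[fΛᵐ, gΛⁿ] = δ_{m+n,0}·(f·Λᵐg − g·Λⁿf), and when n = −m the element f·Λᵐg − g·Λ⁻ᵐf lies in the image of ∂ₓ on 𝒜 (so ∫ res[fΛᵐ, gΛⁿ] dx = 0). -/
open scoped BigOperators

noncomputable section

/-- `DPoly = ℂ[τ][u₀,u₁,…]`: differential polynomials in `u` with an extra parameter `τ`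
(the variable of the base ring `Polynomial ℂ`). -/
abbrev DPoly : Type := MvPolynomial ℕ (Polynomial ℂ)

/-- `R = ℂ[τ][u₀,u₁,…][[ε]]`, a ring containing `𝒜[τ]` where `𝒜 = ℂ[u₀,u₁,…][[ε]]`. -/
abbrev R : Type := PowerSeries DPoly

/-- the variable `uₖ`, the `k`-th spatial derivative of `u = u₀`. -/
def uVar (k : ℕ) : DPoly := MvPolynomial.X k

/-- the formal variable `τ` in `DPoly`. -/
def tauP : DPoly := MvPolynomial.C Polynomial.X

/-- the formal variable `τ` in `R`. -/
def tauR : R := PowerSeries.C tauP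

/-- `u = u₀` as an element of `R`. -/
def uR : R := PowerSeries.C (uVar 0)

/-- the imaginary unit as a constant of `DPoly`. -/
def iC : DPoly := MvPolynomial.C (Polynomial.C Complex.I)

/-- `iε` as an element of `R` (`ε` is the power series variable). -/
def ieps : R := PowerSeries.C iC * PowerSeries.X

/-- The spatial derivative `∂ₓ` on differential polynomials:
`∂ₓ a = Σ_k u_{k+1} ∂a/∂u_k`. -/
def dxP (a : DPoly) : DPoly := a.vars.sum fun k => uVar (k + 1) * MvPolynomial.pderiv k a

/-- The spatial derivative `∂ₓ` on `R`, acting coefficientwise in `ε`. -/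
def dx (a : R) : R := PowerSeries.mk fun N => dxP (PowerSeries.coeff N a)

/-- The operator `iε∂ₓ` on `R`. -/
def iepsdx (a : R) : R := ieps * dx a

/-- The action of the shift `Λ^m = e^{imε∂ₓ}` on `R`:
`Λ^m a = Σ_{k≥0} ((imε)^k/k!) ∂ₓ^k a`. -/
def shift (m : ℤ) (a : R) : R :=
  PowerSeries.mk fun N => ∑ k ∈ Finset.range (N + 1),
    ((Complex.I * (m : ℂ)) ^ k / (Nat.factorial k : ℂ)) • dxP^[k] (PowerSeries.coeff (N - k) a)

/-- Shift(-difference)-differential operators: `A n j` is the coefficient of `Λ^n (iε∂ₓ)^j`.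
Operators appearing in the ILW Lax formalism have support bounded above in `n`
and concentrated in `j ∈ {0, 1}`. -/
abbrev ShiftOp : Type := ℤ → ℕ → R

namespace ShiftOp

/-- the identity operator -/
def one : ShiftOp := fun n j => if n = 0 ∧ j = 0 then 1 else 0

/-- multiplication of an operator by an element of `R` -/
def smulR (r : R) (A : ShiftOp) : ShiftOp := fun n j => r * A n j

/-- difference of operators -/
def sub (A B : ShiftOp) : ShiftOp := fun n j => A n j - B n j

/-- Composition of shift operators, determined by the rules
`(aΛ^p)∘(bΛ^q) = a (Λ^p b) Λ^{p+q}`, `(iε∂ₓ)∘a = a·iε∂ₓ + iε∂ₓ(a)`,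
`(iε∂ₓ)∘Λ^n = Λ^n∘(iε∂ₓ)`.  (The finite sum `∑ᶠ` takes the junk value `0`
if the relevant support is infinite, which does not happen for operators
with `n`-support bounded above and bounded `j`-support.) -/
def mul (A B : ShiftOp) : ShiftOp := fun n j =>
  ∑ᶠ (p : ℤ) (s : ℕ) (t : ℕ) (l : ℕ),
    if l ≤ s ∧ s - l + t = j then
      (Nat.choose s l : R) * A p s * shift p (iepsdx^[l] (B (n - p) t))
    else 0

/-- commutator of operators -/
def comm (A B : ShiftOp) : ShiftOp := sub (mul A B) (mul B A)

/-- the positive part `A₊` of an operator: keep only `Λ^n` with `n ≥ 0` -/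
def pos (A : ShiftOp) : ShiftOp := fun n j => if 0 ≤ n then A n j else 0

/-- the residue of an operator: the coefficient of `Λ^0 (iε∂ₓ)^0` -/
def res (A : ShiftOp) : R := A 0 0

/-- the operator of multiplication by `r ∈ R` -/
def scalar (r : R) : ShiftOp := fun n j => if n = 0 ∧ j = 0 then r else 0

/-- powers of an operator -/
def pow (A : ShiftOp) : ℕ → ShiftOp
  | 0 => one
  | k + 1 => mul A (pow A k)

end ShiftOp

/-- The operator `ℒ = Λ + u − τ·iε∂ₓ`. -/
def LaxCalL : ShiftOp := fun n j =>
  if n = 1 ∧ j = 0 then 1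
  else if n = 0 ∧ j = 0 then uR
  else if n = 0 ∧ j = 1 then -tauR
  else 0

/-- `L` is of the form `Λ + Σ_{n≥0} aₙ Λ^{-n}`. -/
def IsLaxForm (L : ShiftOp) : Prop :=
  L 1 0 = 1 ∧ (∀ n : ℤ, 1 < n → L n 0 = 0) ∧ ∀ (n : ℤ) (j : ℕ), 1 ≤ j → L n j = 0

/-- an element of `R` vanishes after the evaluation `uₖ ↦ 0`. -/
def VanishesAtU0 (a : R) : Prop :=
  ∀ N : ℕ, MvPolynomial.coeff (0 : ℕ →₀ ℕ) (PowerSeries.coeff N a) = 0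

/-- `M = log L`: it has the form `iε∂ₓ + Σ_{n≥1} fₙΛ^{-n}` with each `fₙ` vanishing at
`u = 0`, and commutes with `L` (this characterizes the logarithm
`log L = P∘(iε∂ₓ)∘P⁻¹` defined via a dressing operator `P` with `L = P∘Λ∘P⁻¹`). -/
def IsLogOf (M L : ShiftOp) : Prop :=
  M 0 1 = 1 ∧ (∀ n : ℤ, n ≠ 0 → M n 1 = 0) ∧ (∀ (n : ℤ) (j : ℕ), 2 ≤ j → M n j = 0) ∧
  (∀ n : ℤ, 0 ≤ n → M n 0 = 0) ∧ (∀ n : ℤ, VanishesAtU0 (M n 0)) ∧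
  ShiftOp.mul M L = ShiftOp.mul L M

/-- an element of `R = ℂ[τ][u₀,u₁,…][[ε]]` lies in `𝒜[τ]`, `𝒜 = ℂ[u₀,u₁,…][[ε]]`:
its `τ`-degrees are uniformly bounded. -/
def inATau (a : R) : Prop :=
  ∃ D : ℕ, ∀ (N : ℕ) (m : ℕ →₀ ℕ), ((PowerSeries.coeff N a).coeff m).natDegree ≤ D

/-- `v = ∂u/∂T_d := (1/(τiε(d+1)!))·[(L^{d+1})₊, ℒ]`, i.e. the commutator
`[(L^{d+1})₊, ℒ]` is the operator of multiplication by `τ·iε·(d+1)!·v`. -/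
def IsFlow (L : ShiftOp) (d : ℕ) (v : R) : Prop :=
  ShiftOp.comm (ShiftOp.pos (ShiftOp.pow L (d + 1))) LaxCalL
    = ShiftOp.scalar (tauR * ieps * ((Nat.factorial (d + 1) : ℕ) : R) * v)
/-- an element of `R = ℂ[τ][u₀,…][[ε]]` lies in `𝒜 = ℂ[u₀,…][[ε]]` (no `τ`-dependence) -/
def noTau (a : R) : Prop :=
  ∀ (N : ℕ) (m : ℕ →₀ ℕ), ((PowerSeries.coeff N a).coeff m).natDegree = 0

/-- the one-term operator `f·Λ^m` -/
def single (f : R) (m : ℤ) : ShiftOp := fun n j => if n = m ∧ j = 0 then f else 0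

/-!
Composing one-term operators gives `(fΛᵐ)∘(gΛⁿ) = f·(Λᵐg)·Λ^{m+n}`, so the residue of the commutator
is `δ_{m+n,0}·(f·Λᵐg − g·Λ⁻ᵐf)`. Expanding `Λ^{±m} = Σ_k (±imε)^k/k! ∂ₓ^k`, the `ε^k`-part of this
difference is `(im)^k/k!·(f·∂ₓ^k g − (−1)^k ∂ₓ^k f·g)`, which repeated integration by parts writes as
`∂ₓ` of `Σ_{j<k} (−1)^j ∂ₓ^j f·∂ₓ^{k−1−j} g`. All of this stays inside the `τ`-free subring.
-/

namespace Derivation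

variable {K A : Type*} [CommSemiring K] [CommRing A] [Algebra K A] (D : Derivation K A A)

def integrationByPartsSum (k : ℕ) (f g : A) : A :=
  ∑ j ∈ Finset.range k, (-1) ^ j * (D^[j] f * D^[k - 1 - j] g)

theorem apply_integrationByPartsSum (k : ℕ) (f g : A) :
    D (D.integrationByPartsSum k f g) = f * D^[k] g - (-1) ^ k * (D^[k] f * g) := by
  set T : ℕ → A := fun j => (-1) ^ j * (D^[j] f * D^[k - j] g)
  have step : ∀ j ∈ Finset.range k,
      D ((-1) ^ j * (D^[j] f * D^[k - 1 - j] g)) = T j - T (j + 1) := by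
    intro j hj
    have hk : k - j = k - 1 - j + 1 := by have := Finset.mem_range.mp hj; omega
    have hk' : k - (j + 1) = k - 1 - j := by omega
    simp only [T, hk, hk', Function.iterate_succ_apply', leibniz, leibniz_pow, smul_eq_mul,
      map_neg, map_one_eq_zero]
    ring
  rw [integrationByPartsSum, map_sum, Finset.sum_congr rfl step, Finset.sum_range_sub']
  simp [T]

theorem integrationByPartsSum_mem {S : Subring A} (hD : ∀ a ∈ S, D a ∈ S) (k : ℕ) {f g : A}
    (hf : f ∈ S) (hg : g ∈ S) : D.integrationByPartsSum k f g ∈ S := by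
  have iterate_mem : ∀ j, ∀ a ∈ S, D^[j] a ∈ S := fun j => by
    induction j with
    | zero => exact fun a ha => ha
    | succ j ih => exact fun a ha => ih _ (hD a ha)
  exact sum_mem fun j _ => mul_mem (pow_mem (neg_mem (one_mem S)) j)
    (mul_mem (iterate_mem j f hf) (iterate_mem _ g hg))

end Derivation

namespace PowerSeries

section Derivation

variable {K A : Type*} [CommSemiring K] [CommSemiring A] [Algebra K A]

def coeffwiseDerivation (D : Derivation K A A) : Derivation K A⟦X⟧ A⟦X⟧ where
  toFun f := mk fun n => D (coeff n f)
  map_add' f g := by ext n; simp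
  map_smul' r f := by ext n; simp
  map_one_eq_zero' := by ext n; simp [coeff_one, apply_ite D]
  leibniz' f g := by
    ext n
    simp only [LinearMap.coe_mk, AddHom.coe_mk, smul_eq_mul, map_add, coeff_mk]
    rw [mul_comm g, coeff_mul, coeff_mul, coeff_mul]
    simp only [coeff_mk, map_sum, Derivation.leibniz, smul_eq_mul, ← Finset.sum_add_distrib]
    exact Finset.sum_congr rfl fun p _ => by ring

@[simp]
theorem coeff_coeffwiseDerivation (D : Derivation K A A) (n : ℕ) (f : A⟦X⟧) :
    coeff n (coeffwiseDerivation D f) = D (coeff n f) := by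
  simp [coeffwiseDerivation]

theorem coeff_iterate_coeffwiseDerivation (D : Derivation K A A) (k n : ℕ) (f : A⟦X⟧) :
    coeff n ((coeffwiseDerivation D)^[k] f) = D^[k] (coeff n f) := by
  induction k with
  | zero => rfl
  | succ k ih => simp only [Function.iterate_succ_apply', coeff_coeffwiseDerivation, ih]

end Derivation

section Subring

variable {A : Type*} [CommRing A]

def coeffsInSubring (S : Subring A) : Subring A⟦X⟧ where
  carrier := {f | ∀ n, coeff n f ∈ S}
  zero_mem' n := by simp
  one_mem' n := by rw [coeff_one]; split_ifs <;> simp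
  add_mem' hf hg n := by rw [map_add]; exact add_mem (hf n) (hg n)
  neg_mem' hf n := by rw [map_neg]; exact neg_mem (hf n)
  mul_mem' hf hg n := by
    rw [coeff_mul]; exact sum_mem fun p _ => mul_mem (hf p.1) (hg p.2)

theorem coeffwiseDerivation_mem_coeffsInSubring {K : Type*} [CommSemiring K] [Algebra K A]
    {D : Derivation K A A} {S : Subring A} (hD : ∀ a ∈ S, D a ∈ S) {f : A⟦X⟧}
    (hf : f ∈ coeffsInSubring S) : coeffwiseDerivation D f ∈ coeffsInSubring S := fun n => by
  rw [coeff_coeffwiseDerivation]; exact hD _ (hf n)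

end Subring

end PowerSeries

def dxDerivation : Derivation ℂ DPoly DPoly :=
  (MvPolynomial.mkDerivation (Polynomial ℂ) fun k => uVar (k + 1)).restrictScalars ℂ

theorem coe_dxDerivation : ⇑dxDerivation = dxP := by
  classical
  funext a
  set D : Derivation (Polynomial ℂ) DPoly DPoly :=
    ∑ k ∈ a.vars, uVar (k + 1) • MvPolynomial.pderiv k
  have hD : ∀ b, D b = ∑ k ∈ a.vars, uVar (k + 1) * MvPolynomial.pderiv k b := fun b => by
    rw [← Derivation.coeFnAddMonoidHom_apply, map_sum, Finset.sum_apply]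
    simp [Derivation.coeFnAddMonoidHom_apply]
  rw [dxP, ← hD]
  refine MvPolynomial.derivation_eq_of_forall_mem_vars fun i hi => ?_
  rw [hD, Finset.sum_eq_single i (fun k _ hk => by simp [MvPolynomial.pderiv_X, hk])
    (fun h => absurd hi h)]
  simp [MvPolynomial.mkDerivation_X]

def dxSeries : Derivation ℂ R R :=
  PowerSeries.coeffwiseDerivation dxDerivation

theorem coe_dxSeries : ⇑dxSeries = dx := by
  ext a N : 2
  simp [dxSeries, dx, coe_dxDerivation]

def tauFree : Subalgebra ℂ DPoly := (MvPolynomial.mapAlgHom (Algebra.ofId ℂ (Polynomial ℂ))).range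

theorem noTau_iff_mem_coeffsInSubring {a : R} :
    noTau a ↔ a ∈ PowerSeries.coeffsInSubring tauFree.toSubring := by
  refine ⟨fun ha N => ⟨MvPolynomial.map (Polynomial.evalRingHom 0) (PowerSeries.coeff N a), ?_⟩,
    fun ha N mo => ?_⟩
  · ext mo : 1
    obtain ⟨c, hc⟩ := Polynomial.natDegree_eq_zero.mp (ha N mo)
    simp [MvPolynomial.coeff_map, ← hc]
  · obtain ⟨a₀, h⟩ := ha N
    rw [← h]
    simp [MvPolynomial.coeff_map]

theorem dxP_mem_tauFree {a : DPoly} (ha : a ∈ tauFree) : dxP a ∈ tauFree := by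
  obtain ⟨a₀, rfl⟩ := ha
  refine Subalgebra.sum_mem _ fun k _ => Subalgebra.mul_mem _ ⟨MvPolynomial.X (k + 1), ?_⟩
    ⟨MvPolynomial.pderiv k a₀, ?_⟩
  · simp [uVar]
  · simp [MvPolynomial.pderiv_map]

def shiftCoeff (m : ℤ) (k : ℕ) : ℂ := (Complex.I * m) ^ k / k.factorial

theorem shiftCoeff_neg (m : ℤ) (k : ℕ) : shiftCoeff (-m) k = (-1) ^ k * shiftCoeff m k := by
  simp only [shiftCoeff, Int.cast_neg, mul_neg, neg_pow (Complex.I * m), mul_div_assoc]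

theorem coeff_shift (m : ℤ) (ψ : R) (N : ℕ) :
    PowerSeries.coeff N (shift m ψ) =
      ∑ k ∈ Finset.range (N + 1), shiftCoeff m k • dxP^[k] (PowerSeries.coeff (N - k) ψ) :=
  PowerSeries.coeff_mk _ _

theorem coeff_mul_shift (φ ψ : R) (m : ℤ) (N : ℕ) :
    PowerSeries.coeff N (φ * shift m ψ) = ∑ k ∈ Finset.range (N + 1),
      shiftCoeff m k • PowerSeries.coeff (N - k) (φ * dx^[k] ψ) := by
  simp only [← coe_dxSeries, dxSeries, PowerSeries.coeff_mul,
    Finset.Nat.sum_antidiagonal_eq_sum_range_succ_mk, PowerSeries.coeff_iterate_coeffwiseDerivation,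
    coeff_shift, Finset.mul_sum, Finset.smul_sum, mul_smul_comm, coe_dxDerivation]
  rw [Finset.sum_comm' (t' := Finset.range (N + 1)) (s' := fun k => Finset.range (N - k + 1))
    (fun a k => by simp only [Finset.mem_range]; omega)]
  refine Finset.sum_congr rfl fun k _ => Finset.sum_congr rfl fun a _ => ?_
  rw [Nat.sub_right_comm]

theorem shift_zero (m : ℤ) : shift m 0 = 0 := by
  ext N
  simp [coeff_shift, ← coe_dxDerivation, iterate_map_zero]

theorem single_mul_single (f g : R) (m n : ℤ) :
    ShiftOp.mul (single f m) (single g n) = single (f * shift m g) (m + n) := by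
  funext p j
  rw [ShiftOp.mul, finsum_eq_single _ m fun q hq => by simp [single, hq],
    finsum_eq_single _ 0 fun s hs => by simp [single, hs],
    finsum_eq_single _ j fun t ht => finsum_eq_zero_of_forall_eq_zero fun l => if_neg (by omega),
    finsum_eq_single _ 0 fun l hl => if_neg (by omega)]
  by_cases h : p = m + n ∧ j = 0
  · obtain ⟨rfl, rfl⟩ := h
    simp [single]
  · have : ¬(p - m = n ∧ j = 0) := fun h' => h ⟨by omega, h'.2⟩
    simp [single, h, this, shift_zero]

theorem res_comm_single_single (f g : R) (m n : ℤ) :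
    ShiftOp.res (ShiftOp.comm (single f m) (single g n)) =
      if m + n = 0 then f * shift m g - g * shift n f else 0 := by
  simp only [ShiftOp.res, ShiftOp.comm, ShiftOp.sub, single_mul_single, single, add_comm n m]
  split_ifs <;> simp_all

def shiftCommPrimitive (f g : R) (m : ℤ) : R :=
  PowerSeries.mk fun N => ∑ k ∈ Finset.range (N + 1),
    shiftCoeff m k • PowerSeries.coeff (N - k) (dxSeries.integrationByPartsSum k f g)

theorem dx_shiftCommPrimitive (f g : R) (m : ℤ) :
    dx (shiftCommPrimitive f g m) = f * shift m g - g * shift (-m) f := by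
  refine PowerSeries.ext fun N => ?_
  rw [LinearMap.map_sub, coeff_mul_shift, coeff_mul_shift, ← Finset.sum_sub_distrib, dx,
    PowerSeries.coeff_mk, shiftCommPrimitive, PowerSeries.coeff_mk, ← coe_dxDerivation, map_sum]
  refine Finset.sum_congr rfl fun k _ => ?_
  have h := congrArg (PowerSeries.coeff (N - k)) (dxSeries.apply_integrationByPartsSum k f g)
  rw [dxSeries, PowerSeries.coeff_coeffwiseDerivation, ← dxSeries, coe_dxSeries] at h
  rw [Derivation.map_smul, h, shiftCoeff_neg, map_sub, smul_sub, mul_comm (dx^[k] f) g]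
  rcases Nat.even_or_odd k with hk | hk
  · simp [hk.neg_one_pow, hk.neg_one_pow (α := R)]
  · simp [hk.neg_one_pow, hk.neg_one_pow (α := R), sub_eq_add_neg]

theorem noTau_shiftCommPrimitive {f g : R} (hf : noTau f) (hg : noTau g) (m : ℤ) :
    noTau (shiftCommPrimitive f g m) := by
  rw [noTau_iff_mem_coeffsInSubring] at hf hg ⊢
  have hD : ∀ a ∈ PowerSeries.coeffsInSubring tauFree.toSubring, dxSeries a ∈
      PowerSeries.coeffsInSubring tauFree.toSubring :=
    fun a => PowerSeries.coeffwiseDerivation_mem_coeffsInSubring fun b hb => by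
      rw [coe_dxDerivation]; exact dxP_mem_tauFree hb
  intro N
  rw [shiftCommPrimitive, PowerSeries.coeff_mk]
  exact Subalgebra.sum_mem _ fun k _ => Subalgebra.smul_mem _
    (dxSeries.integrationByPartsSum_mem hD k hf hg (N - k)) _

/-- For any `f, g ∈ 𝒜` and `m, n ∈ ℤ`:
`res[fΛᵐ, gΛⁿ] = δ_{m+n,0}·(f·Λᵐg − g·Λⁿf)`, and when `n = −m` the element
`f·Λᵐg − g·Λ⁻ᵐf` lies in the image of `∂ₓ` on `𝒜` (so `∫ res[fΛᵐ, gΛⁿ] dx = 0`). -/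
theorem ilw_stmt5 (f g : R) (hf : noTau f) (hg : noTau g) (m n : ℤ) :
    ShiftOp.res (ShiftOp.comm (single f m) (single g n))
      = (if m + n = 0 then f * shift m g - g * shift n f else 0) ∧
    (m + n = 0 → ∃ h : R, noTau h ∧ f * shift m g - g * shift n f = dx h) := by
  refine ⟨res_comm_single_single f g m n, fun hmn => ?_⟩
  obtain rfl : n = -m := by omega
  exact ⟨shiftCommPrimitive f g m, noTau_shiftCommPrimitive hf hg m,
    (dx_shiftCommPrimitive f g m).symm⟩
end
end

section
/- For every d ≥ 0, ∂ᵤ([t^{d+1}]S^{d+1}/(d+1)!) = (1/d!)·Σ_{j=0}^{d} τʲ·[t^{d−j}]S^{d−j} in ℚ[u,τ]. (In the dispersionless Lax formalism: ∂/∂u (res L̂₀^{d+1}/(d+1)!) = (1/d!)Σ_{j=0}^{d} τʲ res L̂₀^{d−j}.) -/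
open scoped BigOperators

noncomputable section

/-- `Q2 = ℚ[u, τ]`, realized with outer variable `u` and inner variable `τ`. -/
abbrev Q2 : Type := Polynomial (Polynomial ℚ)

/-- the variable `u` -/
def uQ : Q2 := Polynomial.X

/-- the variable `τ` -/
def tauQ : Q2 := Polynomial.C Polynomial.X

/-- `log F = Σ_{k≥1} (−1)^{k+1}(F−1)ᵏ/k` for a power series `F` with constant term 1
(the coefficient of `tᴺ` only receives contributions from `k ≤ N` since `F − 1` has
positive `t`-order). -/
def logPS (F : PowerSeries Q2) : PowerSeries Q2 :=
  PowerSeries.mk fun N => ∑ k ∈ Finset.Icc 1 N,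
    ((-1 : ℚ) ^ (k + 1) / (k : ℚ)) • PowerSeries.coeff N ((F - 1) ^ k)

/-- `S` is the symbol of the dispersionless ILW Lax operator: the power series in `t`
with constant term 1 satisfying `S = 1 + t·(u + τ·log S)`. -/
def IsILWSymbol (S : PowerSeries Q2) : Prop :=
  PowerSeries.constantCoeff S = 1 ∧
  S = 1 + PowerSeries.X * (PowerSeries.C uQ + PowerSeries.C tauQ * logPS S)
/-- `∂ᵤ` acting coefficientwise on `ℚ[u,τ][[t]]` as `d/du` -/
def dU (F : PowerSeries Q2) : PowerSeries Q2 :=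
  PowerSeries.mk fun N => Polynomial.derivative (PowerSeries.coeff N F)

/-!
Applying `∂ᵤ` to `S = 1 + t(u + τ log S)` and using `S · ∂ᵤ log S = ∂ᵤ S` gives
`(S - tτ) ∂ᵤ S = t S`. Hence `∂ᵤ S^{d+1} = (d+1) t S^{d+1} / (S - tτ)`, which agrees with
`(d+1) Σ_{j ≤ d} τʲ t^{j+1} S^{d-j}` modulo `t^{d+2}` (a geometric sum in `tτ/S`); comparing
coefficients of `t^{d+1}` gives the formula. The identity `S · ∂ log S = ∂ S` holds for every
derivation `∂` killing `t`, because `log S` agrees to any order with a truncated Mercator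
series, whose derivative is a geometric sum.
-/

open PowerSeries Finset
open scoped PowerSeries

namespace Derivation

variable {k R : Type*} [CommRing k] [CommRing R] [Algebra k R]

def powerSeriesMap (D : Derivation k R R) : Derivation k R⟦X⟧ R⟦X⟧ :=
  Derivation.mk'
    { toFun := fun f => PowerSeries.mk fun n => D (coeff n f)
      map_add' := fun f g => by ext n; simp
      map_smul' := fun r f => by ext n; simp }
    fun f g => by
      rw [smul_eq_mul, smul_eq_mul, mul_comm g]
      ext n
      simp only [LinearMap.coe_mk, AddHom.coe_mk, coeff_mk, coeff_mul, map_sum, leibniz,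
        smul_eq_mul, map_add, Finset.sum_add_distrib, mul_comm (coeff _ g)]

@[simp]
lemma coeff_powerSeriesMap (D : Derivation k R R) (n : ℕ) (f : R⟦X⟧) :
    coeff n (D.powerSeriesMap f) = D (coeff n f) := by
  simp [powerSeriesMap]

lemma powerSeriesMap_X (D : Derivation k R R) : D.powerSeriesMap X = 0 := by
  ext n
  rw [coeff_powerSeriesMap, coeff_X, map_zero]
  split_ifs <;> simp

lemma powerSeriesMap_C (D : Derivation k R R) (r : R) : D.powerSeriesMap (C r) = C (D r) := by
  ext n
  rw [coeff_powerSeriesMap, coeff_C, coeff_C]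
  split_ifs <;> simp

end Derivation

lemma Derivation.X_pow_dvd_apply {k R : Type*} [CommRing k] [CommRing R] [Algebra k R⟦X⟧]
    (D : Derivation k R⟦X⟧ R⟦X⟧) (hDX : D X = 0) {n : ℕ} {f : R⟦X⟧} (h : X ^ n ∣ f) :
    X ^ n ∣ D f := by
  obtain ⟨g, rfl⟩ := h
  rw [D.leibniz, D.leibniz_pow, hDX]
  simp

lemma PowerSeries.coeff_pow_eq_zero_of_lt {R : Type*} [CommSemiring R] {f : R⟦X⟧}
    (hf : constantCoeff f = 0) {n k : ℕ} (h : n < k) : coeff n (f ^ k) = 0 :=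
  X_pow_dvd_iff.mp (pow_dvd_pow_of_dvd (X_dvd_iff.mpr hf) k) n h

lemma PowerSeries.coeff_succ_X_mul_sum_X_mul_C_pow {R : Type*} [CommSemiring R] (a : R)
    (F : R⟦X⟧) (d : ℕ) :
    coeff (d + 1) (X * ∑ j ∈ range (d + 1), (X * C a) ^ j * F ^ (d - j)) =
      ∑ j ∈ range (d + 1), a ^ j * coeff (d - j) (F ^ (d - j)) := by
  rw [coeff_succ_X_mul, map_sum]
  refine sum_congr rfl fun j hj => ?_
  rw [mul_pow, ← map_pow, mul_assoc, coeff_X_pow_mul', if_pos (mem_range_succ_iff.mp hj),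
    coeff_C_mul]

section LogTrunc

variable {k A : Type*} [CommRing k] [CommRing A] [Algebra k A] [Algebra ℚ A]

def logTrunc (a : A) (M : ℕ) : A :=
  -∑ i ∈ range M, (i + 1 : ℚ)⁻¹ • (1 - a) ^ (i + 1)

lemma derivation_logTrunc (D : Derivation k A A) (a : A) (M : ℕ) :
    D (logTrunc a M) = D a * ∑ i ∈ range M, (1 - a) ^ i := by
  rw [logTrunc, map_neg, map_sum, mul_sum, ← sum_neg_distrib]
  refine sum_congr rfl fun i _ => ?_
  rw [map_rat_smul, D.leibniz_pow, map_sub, D.map_one_eq_zero, Nat.add_sub_cancel,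
    ← Nat.cast_smul_eq_nsmul ℚ, smul_smul]
  push_cast
  rw [inv_mul_cancel₀ (by positivity), one_smul, smul_eq_mul]
  ring

lemma mul_derivation_logTrunc (D : Derivation k A A) (a : A) (M : ℕ) :
    a * D (logTrunc a M) = D a - (1 - a) ^ M * D a := by
  have hgeom := mul_neg_geom_sum (1 - a) M
  rw [sub_sub_cancel] at hgeom
  rw [derivation_logTrunc, mul_left_comm, hgeom]
  ring

end LogTrunc

lemma logPS_summand_eq (S : Q2⟦X⟧) (k : ℕ) :
    ((-1 : ℚ) ^ (k + 1) / k) • (S - 1) ^ k = -((k : ℚ)⁻¹ • (1 - S) ^ k) := by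
  rw [← neg_sub 1 S, neg_pow (1 - S), pow_succ]
  rcases Nat.even_or_odd k with h | h <;> simp [h.neg_one_pow, neg_div]

lemma coeff_logPS_eq_coeff_logTrunc {S : Q2⟦X⟧} (hS : constantCoeff S = 1) {n M : ℕ}
    (h : n ≤ M) : coeff n (logPS S) = coeff n (logTrunc S M) := by
  have hS1 : constantCoeff (S - 1) = 0 := by rw [map_sub, hS, map_one, sub_self]
  have htrunc : coeff n (logPS S) =
      coeff n (∑ k ∈ Icc 1 M, ((-1 : ℚ) ^ (k + 1) / k) • (S - 1) ^ k) := by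
    rw [logPS, coeff_mk, map_sum]
    simp only [coeff_smul]
    refine sum_subset (Icc_subset_Icc_right h) fun k hk hkn => ?_
    rw [coeff_pow_eq_zero_of_lt hS1, smul_zero]
    simp only [mem_Icc] at hk hkn
    omega
  rw [htrunc, logTrunc, sum_congr rfl fun k _ => logPS_summand_eq S k, sum_neg_distrib,
    ← Ico_add_one_right_eq_Icc, sum_Ico_eq_sum_range, Nat.add_sub_cancel]
  simp [add_comm 1]

lemma X_pow_dvd_logPS_sub_logTrunc {S : Q2⟦X⟧} (hS : constantCoeff S = 1) (M : ℕ) :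
    X ^ (M + 1) ∣ logPS S - logTrunc S M :=
  X_pow_dvd_iff.mpr fun n hn => by
    rw [map_sub, coeff_logPS_eq_coeff_logTrunc hS (Nat.lt_succ_iff.mp hn), sub_self]

theorem mul_derivation_logPS {k : Type*} [CommRing k] [Algebra k Q2]
    (D : Derivation k Q2⟦X⟧ Q2⟦X⟧) (hDX : D X = 0) {S : Q2⟦X⟧} (hS : constantCoeff S = 1) :
    S * D (logPS S) = D S := by
  ext N : 1
  have hX : (X : Q2⟦X⟧) ∣ 1 - S := X_dvd_iff.mpr (by rw [map_sub, hS, map_one, sub_self])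
  have hdvd : X ^ (N + 1) ∣ S * D (logPS S) - D S := by
    have hsplit : S * D (logPS S) - D S =
        S * D (logPS S - logTrunc S (N + 1)) - (1 - S) ^ (N + 1) * D S := by
      rw [map_sub, mul_sub, mul_derivation_logTrunc]
      ring
    rw [hsplit]
    exact dvd_sub ((pow_dvd_pow X (N + 1).le_succ).trans
      ((D.X_pow_dvd_apply hDX (X_pow_dvd_logPS_sub_logTrunc hS (N + 1))).mul_left S))
      ((pow_dvd_pow_of_dvd hX _).mul_right _)
  have hN := X_pow_dvd_iff.mp hdvd N N.lt_succ_self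
  rwa [map_sub, sub_eq_zero] at hN

section ILW

variable {k : Type*} [CommRing k] [Algebra k Q2] (D : Derivation k Q2⟦X⟧ Q2⟦X⟧)

lemma IsILWSymbol.mul_derivation (hDX : D X = 0) (hDu : D (C uQ) = 1) (hDtau : D (C tauQ) = 0)
    {S : Q2⟦X⟧} (hS : IsILWSymbol S) :
    (S - X * C tauQ) * D S = X * S := by
  obtain ⟨hc, heq⟩ := hS
  have hlog := mul_derivation_logPS D hDX hc
  have hDS : D S = X * (1 + C tauQ * D (logPS S)) := by
    conv_lhs => rw [heq]
    simp [D.leibniz, hDX, hDu, hDtau]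
  linear_combination S * hDS + X * C tauQ * hlog

lemma IsILWSymbol.X_pow_dvd_derivation_pow_sub (hDX : D X = 0) (hDu : D (C uQ) = 1)
    (hDtau : D (C tauQ) = 0) {S : Q2⟦X⟧} (hS : IsILWSymbol S) (d : ℕ) :
    X ^ (d + 2) ∣ D (S ^ (d + 1)) -
      (d + 1) • (X * ∑ j ∈ range (d + 1), (X * C tauQ) ^ j * S ^ (d - j)) := by
  have hU : IsUnit (S - X * C tauQ) := by
    rw [isUnit_iff_constantCoeff, map_sub, hS.1, map_mul, constantCoeff_X, zero_mul, sub_zero]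
    exact isUnit_one
  have hgeom := (Commute.all (X * C tauQ) S).mul_neg_geom_sum₂ (d + 1)
  rw [Nat.add_sub_cancel] at hgeom
  have hmul := hS.mul_derivation D hDX hDu hDtau
  rw [← hU.dvd_mul_left]
  refine ⟨(d + 1) • C (tauQ ^ (d + 1)), ?_⟩
  rw [D.leibniz_pow, Nat.add_sub_cancel]
  simp only [nsmul_eq_mul, smul_eq_mul, map_pow]
  push_cast
  linear_combination (↑d + 1) * S ^ d * hmul - (↑d + 1) * X * hgeom

lemma IsILWSymbol.coeff_derivation_pow (hDX : D X = 0) (hDu : D (C uQ) = 1)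
    (hDtau : D (C tauQ) = 0) {S : Q2⟦X⟧} (hS : IsILWSymbol S) (d : ℕ) :
    coeff (d + 1) (D (S ^ (d + 1))) =
      (d + 1) • ∑ j ∈ range (d + 1), tauQ ^ j * coeff (d - j) (S ^ (d - j)) := by
  have h := X_pow_dvd_iff.mp (hS.X_pow_dvd_derivation_pow_sub D hDX hDu hDtau d) (d + 1)
    (by omega)
  rwa [map_sub, sub_eq_zero, map_nsmul, coeff_succ_X_mul_sum_X_mul_C_pow] at h

end ILW

/-- For every `d ≥ 0`,
`∂ᵤ([t^{d+1}]S^{d+1}/(d+1)!) = (1/d!)·Σ_{j=0}^{d} τʲ·[t^{d−j}]S^{d−j}` in `ℚ[u,τ]`. -/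
theorem ilw_stmt11 (S : PowerSeries Q2) (hS : IsILWSymbol S) (d : ℕ) :
    Polynomial.derivative
        ((Nat.factorial (d + 1) : ℚ)⁻¹ • PowerSeries.coeff (d + 1) (S ^ (d + 1)))
      = (Nat.factorial d : ℚ)⁻¹ •
          ∑ j ∈ Finset.range (d + 1), tauQ ^ j * PowerSeries.coeff (d - j) (S ^ (d - j)) := by
  set D := (Polynomial.derivative' : Derivation (Polynomial ℚ) Q2 Q2).powerSeriesMap
  have hDX : D X = 0 := Derivation.powerSeriesMap_X _
  have hDu : D (C uQ) = 1 := by simp [D, Derivation.powerSeriesMap_C, uQ]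
  have hDtau : D (C tauQ) = 0 := by simp [D, Derivation.powerSeriesMap_C, tauQ]
  have h := hS.coeff_derivation_pow D hDX hDu hDtau d
  rw [Derivation.coeff_powerSeriesMap, Polynomial.derivative'_apply] at h
  rw [Polynomial.derivative_smul, h, ← Nat.cast_smul_eq_nsmul ℚ, smul_smul, Nat.factorial_succ]
  congr 1
  push_cast
  field_simp
end
end

section
/- For every d ≥ 0 the dispersionless Hamiltonian identity holds in ℚ[u,τ]: ∂ᵤ( [t^{d+2}]S^{d+2}/(d+2)! − (τ/(d+1))·[t^{d+1}]S^{d+1}/(d+1)! ) = [t^{d+1}]S^{d+1}/(d+1)!. -/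
open scoped BigOperators

noncomputable section

/-!
Applying `∂ᵤ` to `S = 1 + t(u + τ log S)` and using the logarithmic-derivative identity
`S · ∂ᵤ(log S) = ∂ᵤ S` gives `S ∂ᵤS = t(S + τ ∂ᵤS)`. Multiplying by `(d + 2) S^d` yields
`∂ᵤ S^{d+2} = (d + 2) t S^{d+1} + (d + 2)/(d + 1) · τ t ∂ᵤ S^{d+1}`, and comparing coefficients
of `t^{d+2}` gives the identity after dividing by `(d + 2)!`.

The logarithmic-derivative identity holds for every derivation killing `t`: modulo `t^{M+1}`,
`log S` is its `M`-th partial sum, whose derivative is `∂S` times a geometric sum in `1 - S`,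
so `S · ∂(log S) ≡ ∂S - (1 - S)^M ∂S ≡ ∂S` modulo `t^M` for every `M`.
-/

open PowerSeries

lemma Derivation.map_pow_mul_of_map_eq_zero {R A : Type*} [CommSemiring R] [CommSemiring A]
    [Algebra R A] (D : Derivation R A A) {a : A} (ha : D a = 0) (n : ℕ) (b : A) :
    D (a ^ n * b) = a ^ n * D b := by
  simp [Derivation.leibniz, Derivation.leibniz_pow, ha]

lemma PowerSeries.eq_zero_of_forall_X_pow_dvd {R : Type*} [Semiring R] {f : PowerSeries R}
    (h : ∀ n, X ^ n ∣ f) : f = 0 := by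
  ext n
  exact X_pow_dvd_iff.mp (h (n + 1)) n n.lt_succ_self

def logPartialSum (F : PowerSeries Q2) (M : ℕ) : PowerSeries Q2 :=
  ∑ k ∈ Finset.Icc 1 M, ((-1 : ℚ) ^ (k + 1) / (k : ℚ)) • (F - 1) ^ k

lemma X_pow_dvd_logPS_sub_logPartialSum {F : PowerSeries Q2} (hF : constantCoeff F = 1)
    (M : ℕ) : X ^ (M + 1) ∣ logPS F - logPartialSum F M := by
  have hX : X ∣ F - 1 := X_dvd_iff.mpr (by simp [hF])
  refine X_pow_dvd_iff.mpr fun j hj => ?_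
  rw [map_sub, sub_eq_zero, logPS, coeff_mk, logPartialSum, map_sum]
  simp only [LinearMap.map_smul_of_tower]
  refine Finset.sum_subset (Finset.Icc_subset_Icc_right (by omega)) fun k hk hkj => ?_
  have hjk : j < k := by simp only [Finset.mem_Icc] at hk hkj; omega
  rw [X_pow_dvd_iff.mp (pow_dvd_pow_of_dvd hX k) j hjk, smul_zero]

section LogDerivative

variable (D : Derivation ℚ (PowerSeries Q2) (PowerSeries Q2))

lemma map_logPartialSum (F : PowerSeries Q2) (M : ℕ) :
    D (logPartialSum F M) = (∑ i ∈ Finset.range M, (1 - F) ^ i) * D F := by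
  induction M with
  | zero => simp [logPartialSum]
  | succ M ih =>
    rw [logPartialSum, Finset.sum_Icc_succ_top (by omega), ← logPartialSum, map_add, ih,
      Finset.sum_range_succ, add_mul]
    congr 1
    rw [D.map_smul, D.leibniz_pow, D.map_sub, D.map_one_eq_zero, sub_zero,
      ← Nat.cast_smul_eq_nsmul ℚ, smul_smul, smul_eq_mul, Nat.add_sub_cancel]
    have : (-1 : ℚ) ^ (M + 1 + 1) / ((M + 1 : ℕ) : ℚ) * ((M + 1 : ℕ) : ℚ) = (-1) ^ M := by
      field_simp; ring
    rw [this, show 1 - F = (-1 : ℚ) • (F - 1) by rw [neg_one_smul, neg_sub], smul_pow,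
      smul_mul_assoc]

lemma mul_map_logPartialSum (F : PowerSeries Q2) (M : ℕ) :
    F * D (logPartialSum F M) = D F - (1 - F) ^ M * D F := by
  have hgeom : F * ∑ i ∈ Finset.range M, (1 - F) ^ i = 1 - (1 - F) ^ M := by
    simpa using mul_neg_geom_sum (1 - F) M
  rw [map_logPartialSum, ← mul_assoc, hgeom, sub_mul, one_mul]

lemma mul_map_logPS {F : PowerSeries Q2} (hF : constantCoeff F = 1) (hD : D X = 0) :
    F * D (logPS F) = D F := by
  refine sub_eq_zero.mp (eq_zero_of_forall_X_pow_dvd fun M => ?_)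
  obtain ⟨G, hG⟩ := X_pow_dvd_logPS_sub_logPartialSum hF M
  have hlog : logPS F = logPartialSum F M + X ^ (M + 1) * G := by rw [← hG]; ring
  have hX : X ∣ 1 - F := X_dvd_iff.mpr (by simp [hF])
  rw [hlog, D.map_add, D.map_pow_mul_of_map_eq_zero hD, mul_add, mul_map_logPartialSum,
    show D F - (1 - F) ^ M * D F + F * (X ^ (M + 1) * D G) - D F
      = X ^ (M + 1) * (F * D G) - (1 - F) ^ M * D F by ring]
  exact dvd_sub (dvd_mul_of_dvd_left (pow_dvd_pow X M.le_succ) _)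
    (dvd_mul_of_dvd_left (pow_dvd_pow_of_dvd hX M) _)

end LogDerivative

def dUDerivation : Derivation ℚ (PowerSeries Q2) (PowerSeries Q2) :=
  Derivation.mk'
    { toFun := dU
      map_add' := fun F G => by ext N; simp [dU]
      map_smul' := fun q F => by ext N; simp [dU] }
    fun F G => by
      rw [smul_eq_mul, smul_eq_mul, mul_comm G, add_comm]
      ext N
      simp only [LinearMap.coe_mk, AddHom.coe_mk, map_add, dU, coeff_mk, coeff_mul, map_sum,
        Polynomial.derivative_mul, Finset.sum_add_distrib]

lemma dUDerivation_apply (F : PowerSeries Q2) : dUDerivation F = dU F := rfl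

lemma coeff_dU (N : ℕ) (F : PowerSeries Q2) :
    coeff N (dU F) = Polynomial.derivative (coeff N F) :=
  coeff_mk _ _

lemma dU_C (p : Q2) : dU (C p) = C (Polynomial.derivative p) := by
  ext N
  rw [coeff_dU, coeff_C, coeff_C]
  split_ifs <;> simp

lemma dU_X : dU (X : PowerSeries Q2) = 0 := by
  ext N
  rw [coeff_dU, coeff_X]
  split_ifs <;> simp

lemma dU_pow_succ (F : PowerSeries Q2) (n : ℕ) :
    dU (F ^ (n + 1)) = (n + 1 : ℚ) • (F ^ n * dU F) := by
  rw [← dUDerivation_apply, Derivation.leibniz_pow, ← Nat.cast_smul_eq_nsmul ℚ]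
  simp [dUDerivation_apply]

lemma derivative_uQ : Polynomial.derivative uQ = 1 := by simp [uQ]

lemma derivative_tauQ : Polynomial.derivative tauQ = 0 := by simp [tauQ]

namespace IsILWSymbol

variable {S : PowerSeries Q2} (hS : IsILWSymbol S)
include hS

lemma dU_eq : dU S = X * (1 + C tauQ * dU (logPS S)) := by
  conv_lhs => rw [hS.2]
  simp only [← dUDerivation_apply, Derivation.leibniz, Derivation.map_one_eq_zero, map_add]
  simp [dUDerivation_apply, dU_X, dU_C, derivative_uQ, derivative_tauQ]

lemma mul_dU : S * dU S = X * (S + C tauQ * dU S) := by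
  have hlog : S * dU (logPS S) = dU S := mul_map_logPS dUDerivation hS.1 dU_X
  calc S * dU S = X * (S + C tauQ * (S * dU (logPS S))) := by rw [hS.dU_eq]; ring
    _ = X * (S + C tauQ * dU S) := by rw [hlog]

lemma dU_pow_add_two (d : ℕ) :
    dU (S ^ (d + 2)) = (d + 2 : ℚ) • (X * S ^ (d + 1))
      + ((d + 2) / (d + 1) : ℚ) • (X * C tauQ * dU (S ^ (d + 1))) := by
  rw [dU_pow_succ, dU_pow_succ, show S ^ (d + 1) * dU S = S ^ d * (S * dU S) by ring, hS.mul_dU,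
    show S ^ d * (X * (S + C tauQ * dU S)) = X * S ^ (d + 1) + X * C tauQ * (S ^ d * dU S) by ring,
    mul_smul_comm, smul_smul, div_mul_cancel₀ _ (by positivity)]
  push_cast
  module

lemma derivative_coeff_pow_add_two (d : ℕ) :
    Polynomial.derivative (coeff (d + 2) (S ^ (d + 2)))
      = (d + 2 : ℚ) • coeff (d + 1) (S ^ (d + 1))
        + ((d + 2) / (d + 1) : ℚ) •
          (tauQ * Polynomial.derivative (coeff (d + 1) (S ^ (d + 1)))) := by
  rw [← coeff_dU, hS.dU_pow_add_two, map_add, LinearMap.map_smul_of_tower,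
    LinearMap.map_smul_of_tower, coeff_succ_X_mul, mul_assoc, coeff_succ_X_mul, coeff_C_mul,
    coeff_dU]

end IsILWSymbol

/-- For every `d ≥ 0` the dispersionless Hamiltonian identity holds in
`ℚ[u,τ]`: `∂ᵤ([t^{d+2}]S^{d+2}/(d+2)! − (τ/(d+1))·[t^{d+1}]S^{d+1}/(d+1)!)
= [t^{d+1}]S^{d+1}/(d+1)!`. -/
theorem ilw_stmt13 (S : PowerSeries Q2) (hS : IsILWSymbol S) (d : ℕ) :
    Polynomial.derivative
        ((Nat.factorial (d + 2) : ℚ)⁻¹ • PowerSeries.coeff (d + 2) (S ^ (d + 2))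
          - (d + 1 : ℚ)⁻¹ • (tauQ *
              ((Nat.factorial (d + 1) : ℚ)⁻¹ • PowerSeries.coeff (d + 1) (S ^ (d + 1)))))
      = (Nat.factorial (d + 1) : ℚ)⁻¹ • PowerSeries.coeff (d + 1) (S ^ (d + 1)) := by
  rw [map_sub, Polynomial.derivative_smul, Polynomial.derivative_smul, Polynomial.derivative_mul,
    derivative_tauQ, zero_mul, zero_add, Polynomial.derivative_smul,
    hS.derivative_coeff_pow_add_two, Nat.factorial_succ (d + 1),
    mul_smul_comm]
  match_scalars <;> field_simp <;> ring
end
end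

section
/- For every d ≥ 0, [t^{d+1}]S^{d+1}/(d+1)! = (∏_{j=1}^{d}(∂ᵤ⁻¹ + τ/j)) u in ℚ[u,τ], where ∂ᵤ⁻¹ is the ℚ[τ]-linear map on ℚ[u,τ] with ∂ᵤ⁻¹uʲ := u^{j+1}/(j+1) for j ≥ 0 and the factors of the product (which commute) are composed as operators. -/
open scoped BigOperators

noncomputable section

/-- the `ℚ[τ]`-linear map `∂ᵤ⁻¹` on `ℚ[u,τ]` with `∂ᵤ⁻¹ uʲ = u^{j+1}/(j+1)` -/
def intU (p : Q2) : Q2 :=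
  p.sum fun j c => Polynomial.C (((j : ℚ) + 1)⁻¹ • c) * Polynomial.X ^ (j + 1)

/-- the operator `∏_{j=1}^{n}(∂ᵤ⁻¹ + τ/j)` (the factors commute) applied to `p` -/
def iterProd : ℕ → Q2 → Q2
  | 0, p => p
  | n + 1, p => intU (iterProd n p) + (((n : ℚ) + 1)⁻¹ • tauQ) * iterProd n p

/-!
Write `∂ᵤ` for the `u`-derivative. Since `S · ∂ᵤ log S = ∂ᵤ S`, differentiating the defining
equation gives `∂ᵤ S · (S - tτ) = t S`, i.e. `∂ᵤ S = t S A` with `A = (S - tτ)⁻¹`. Hence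
`∂ᵤ [tⁿ⁺¹] Sⁿ⁺¹ = (n + 1) [tⁿ] Sⁿ⁺¹ A`, and `S A = 1 + tτ A` gives
`[tⁿ⁺¹] Sⁿ⁺² A = [tⁿ⁺¹] Sⁿ⁺¹ + τ [tⁿ] Sⁿ⁺¹ A`. So both sides of the recursion
`cₙ₊₂ = (∂ᵤ⁻¹ + τ/(n+1)) cₙ₊₁` for `cₙ = [tⁿ] Sⁿ / n!` have the same `u`-derivative, and both
vanish at `u = 0`, where the defining equation forces `S = 1`.
-/

open scoped Polynomial
open PowerSeries

theorem Polynomial.eq_of_derivative_eq_of_coeff_zero_eq {R : Type*} [Ring R]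
    [IsAddTorsionFree R] {p q : R[X]} (hd : Polynomial.derivative p = Polynomial.derivative q)
    (h0 : p.coeff 0 = q.coeff 0) : p = q := by
  have h := Polynomial.eq_C_of_derivative_eq_zero (p := p - q) (by rw [map_sub, hd, sub_self])
  rwa [Polynomial.coeff_sub, h0, sub_self, map_zero, sub_eq_zero] at h

namespace PowerSeries

section CommRing

variable {R : Type*} [CommRing R]

theorem coeff_eq_zero_of_X_pow_dvd {n : ℕ} {F : R⟦X⟧} (h : X ^ (n + 1) ∣ F) : coeff n F = 0 :=
  X_pow_dvd_iff.mp h n (lt_add_one n)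

theorem X_dvd_sub_one {F : R⟦X⟧} (hF : constantCoeff F = 1) : X ∣ F - 1 := by
  rw [X_dvd_iff, map_sub, hF, map_one, sub_self]

theorem coeff_pow_mul_succ_of_mul_eq_one {S A : R⟦X⟧} {c : R} (hA : (S - X * C c) * A = 1)
    (n : ℕ) :
    coeff (n + 1) (S ^ (n + 2) * A)
      = coeff (n + 1) (S ^ (n + 1)) + c * coeff n (S ^ (n + 1) * A) := by
  have h : S ^ (n + 2) * A = S ^ (n + 1) + X * (C c * (S ^ (n + 1) * A)) := by
    linear_combination S ^ (n + 1) * hA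
  rw [h, map_add, coeff_succ_X_mul, coeff_C_mul]

end CommRing

variable (R : Type*) {A : Type*} [CommRing R] [CommRing A] [Algebra R A]

-- `∂ᵤ` on `ℚ[u,τ]⟦t⟧`: the derivative in the polynomial variable, applied to each `t`-coefficient.
def mapDerivative : Derivation R A[X]⟦X⟧ A[X]⟦X⟧ :=
  Derivation.mk'
    { toFun := fun F => mk fun n => Polynomial.derivative (coeff n F)
      map_add' := fun F G => by ext n; simp
      map_smul' := fun c F => by ext n; simp }
    fun F G => by
      ext n : 1
      simp only [LinearMap.coe_mk, AddHom.coe_mk, smul_eq_mul, mul_comm G, map_add, coeff_mk,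
        coeff_mul, map_sum, Polynomial.derivative_mul, Finset.sum_add_distrib, add_comm]

variable {R}

@[simp]
theorem coeff_mapDerivative (F : A[X]⟦X⟧) (n : ℕ) :
    coeff n (mapDerivative R F) = Polynomial.derivative (coeff n F) := by
  simp [mapDerivative]

@[simp]
theorem mapDerivative_C (a : A[X]) : mapDerivative R (C a) = C (Polynomial.derivative a) := by
  ext n
  simp [coeff_C, apply_ite Polynomial.derivative]

@[simp]
theorem mapDerivative_X : mapDerivative R (X : A[X]⟦X⟧) = 0 := by
  ext n
  simp [coeff_X, apply_ite Polynomial.derivative]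

theorem X_pow_dvd_mapDerivative {n : ℕ} {F : A[X]⟦X⟧} (h : X ^ n ∣ F) :
    X ^ n ∣ mapDerivative R F := by
  obtain ⟨G, rfl⟩ := h
  exact ⟨mapDerivative R G, by simp [Derivation.leibniz, Derivation.leibniz_pow]⟩

end PowerSeries

namespace ILW

def logPartial (F : Q2⟦X⟧) (M : ℕ) : Q2⟦X⟧ :=
  ∑ k ∈ Finset.Icc 1 M, ((-1 : ℚ) ^ (k + 1) / (k : ℚ)) • (F - 1) ^ k

section Log

variable {F : Q2⟦X⟧}

theorem coeff_logPS_eq_coeff_logPartial (hF : constantCoeff F = 1) {N M : ℕ} (h : N ≤ M) :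
    coeff N (logPS F) = coeff N (logPartial F M) := by
  rw [logPS, coeff_mk, logPartial, map_sum]
  simp only [coeff_smul]
  refine Finset.sum_subset (Finset.Icc_subset_Icc_right h) fun k hk hkN => ?_
  have hNk : N + 1 ≤ k := by simp_all
  have hdvd : X ^ (N + 1) ∣ (F - 1) ^ k :=
    (pow_dvd_pow X hNk).trans (pow_dvd_pow_of_dvd (X_dvd_sub_one hF) k)
  rw [coeff_eq_zero_of_X_pow_dvd hdvd, smul_zero]

theorem X_pow_dvd_logPS_sub_logPartial (hF : constantCoeff F = 1) (M : ℕ) :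
    X ^ (M + 1) ∣ logPS F - logPartial F M := by
  refine X_pow_dvd_iff.mpr fun N hN => ?_
  rw [map_sub, coeff_logPS_eq_coeff_logPartial hF (Nat.lt_succ_iff.mp hN), sub_self]

theorem mapDerivative_logPartial (F : Q2⟦X⟧) (M : ℕ) :
    mapDerivative ℚ (logPartial F M)
      = (∑ i ∈ Finset.range M, (1 - F) ^ i) * mapDerivative ℚ F := by
  induction M with
  | zero => simp [logPartial]
  | succ M ih =>
    rw [logPartial, Finset.sum_Icc_succ_top (by omega), ← logPartial, map_add, ih,
      Finset.sum_range_succ, add_mul]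
    congr 1
    rw [map_rat_smul, Derivation.leibniz_pow, Nat.add_sub_cancel, map_sub,
      Derivation.map_one_eq_zero, sub_zero, smul_eq_mul, ← Nat.cast_smul_eq_nsmul ℚ, smul_smul,
      ← neg_sub F 1, ← neg_one_smul ℚ (F - 1), smul_pow, smul_mul_assoc]
    congr 1
    rw [div_mul_cancel₀ _ (Nat.cast_ne_zero.mpr M.succ_ne_zero)]
    ring

-- Up to order `N`, `∂ᵤ log F` is `∂ᵤ F` times the truncated geometric series for `1 / F`.
theorem mul_mapDerivative_logPS (hF : constantCoeff F = 1) :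
    F * mapDerivative ℚ (logPS F) = mapDerivative ℚ F := by
  set D : Derivation ℚ Q2⟦X⟧ Q2⟦X⟧ := mapDerivative ℚ
  have hDF : X ^ 1 ∣ D (F - 1) := X_pow_dvd_mapDerivative (by simpa using X_dvd_sub_one hF)
  rw [map_sub, Derivation.map_one_eq_zero, sub_zero, pow_one] at hDF
  refine ext fun N => sub_eq_zero.mp ?_
  have hgeom : F * D (logPartial F N) = D F - (1 - F) ^ N * D F := by
    have h := mul_neg_geom_sum (1 - F) N
    rw [sub_sub_cancel] at h
    rw [mapDerivative_logPartial, ← mul_assoc, h, sub_mul, one_mul]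
  have hsplit : F * D (logPS F) - D F
      = F * D (logPS F - logPartial F N) - (1 - F) ^ N * D F := by
    rw [map_sub, mul_sub, hgeom]; ring
  rw [← map_sub, hsplit]
  refine coeff_eq_zero_of_X_pow_dvd (dvd_sub (dvd_mul_of_dvd_right
    (X_pow_dvd_mapDerivative (X_pow_dvd_logPS_sub_logPartial hF N)) F) ?_)
  rw [pow_succ]
  exact mul_dvd_mul (pow_dvd_pow_of_dvd (by simpa using (X_dvd_sub_one hF).neg_right) N) hDF

end Log

theorem derivative_intU (p : Q2) : Polynomial.derivative (intU p) = p := by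
  conv_rhs => rw [← p.sum_C_mul_X_pow_eq]
  rw [intU, Polynomial.sum, Polynomial.sum, map_sum]
  refine Finset.sum_congr rfl fun j _ => ?_
  rw [Polynomial.derivative_C_mul_X_pow, Nat.add_sub_cancel, smul_mul_assoc, ← nsmul_eq_mul',
    ← Nat.cast_smul_eq_nsmul ℚ, smul_smul, Nat.cast_add_one,
    inv_mul_cancel₀ (by positivity), one_smul]

theorem coeff_zero_intU (p : Q2) : (intU p).coeff 0 = 0 := by
  simp [intU, Polynomial.sum, Polynomial.coeff_X_pow]

section Symbol

variable {S : Q2⟦X⟧}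

theorem coeff_succ_of_isILWSymbol (hS : IsILWSymbol S) (n : ℕ) :
    coeff (n + 1) S = (if n = 0 then uQ else 0) + tauQ * coeff n (logPS S) := by
  nth_rewrite 1 [hS.2]
  rw [map_add, coeff_one, if_neg n.succ_ne_zero, coeff_succ_X_mul, map_add, coeff_C,
    coeff_C_mul, zero_add]

theorem mapDerivative_mul_sub_of_isILWSymbol (hS : IsILWSymbol S) :
    mapDerivative ℚ S * (S - X * C tauQ) = X * S := by
  have hD : mapDerivative ℚ S = X * (1 + C tauQ * mapDerivative ℚ (logPS S)) := by
    nth_rewrite 1 [hS.2]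
    simp [uQ, tauQ, Derivation.leibniz]
  linear_combination S * hD + X * C tauQ * mul_mapDerivative_logPS hS.1

theorem derivative_coeff_pow_self (hS : IsILWSymbol S) {A : Q2⟦X⟧}
    (hA : (S - X * C tauQ) * A = 1) (n : ℕ) :
    Polynomial.derivative (coeff (n + 1) (S ^ (n + 1)))
      = (n + 1) • coeff n (S ^ (n + 1) * A) := by
  have hDS : mapDerivative ℚ S = X * S * A := by
    linear_combination A * mapDerivative_mul_sub_of_isILWSymbol hS - mapDerivative ℚ S * hA
  rw [← coeff_mapDerivative (R := ℚ), Derivation.leibniz_pow, hDS, Nat.add_sub_cancel,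
    smul_eq_mul, show S ^ n * (X * S * A) = X * (S ^ (n + 1) * A) by ring, map_nsmul,
    coeff_succ_X_mul]

theorem map_constantCoeff_of_isILWSymbol (hS : IsILWSymbol S) :
    map Polynomial.constantCoeff S = 1 := by
  set T := map Polynomial.constantCoeff S
  have hT0 : constantCoeff T = 1 := by
    rw [← coeff_zero_eq_constantCoeff_apply, coeff_map, coeff_zero_eq_constantCoeff_apply, hS.1,
      map_one]
  suffices h : ∀ n, X ^ (n + 1) ∣ T - 1 from
    ext fun n => sub_eq_zero.mp (by rw [← map_sub]; exact coeff_eq_zero_of_X_pow_dvd (h n))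
  intro n
  induction n with
  | zero => simpa using X_dvd_sub_one hT0
  | succ n ih =>
    refine X_pow_dvd_iff.mpr fun m hm => ?_
    rcases Nat.lt_succ_iff_lt_or_eq.mp hm with hm | rfl
    · exact X_pow_dvd_iff.mp ih m hm
    have hlog : Polynomial.constantCoeff (coeff n (logPS S)) = 0 := by
      rw [logPS, coeff_mk, map_sum]
      refine Finset.sum_eq_zero fun k hk => ?_
      have hk1 : 1 ≤ k := (Finset.mem_Icc.mp hk).1
      rw [map_rat_smul, ← coeff_map, map_pow, map_sub, map_one,
        coeff_eq_zero_of_X_pow_dvd (ih.trans (dvd_pow_self _ (by omega))), smul_zero]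
    rw [map_sub, coeff_one, if_neg n.succ_ne_zero, sub_zero, coeff_map,
      coeff_succ_of_isILWSymbol hS, map_add, map_mul, hlog, mul_zero, add_zero]
    split_ifs <;> simp [uQ]

theorem coeff_zero_coeff_pow_of_isILWSymbol (hS : IsILWSymbol S) {n : ℕ} (hn : n ≠ 0)
    (p : ℕ) : (coeff n (S ^ p)).coeff 0 = 0 := by
  rw [← Polynomial.constantCoeff_apply, ← coeff_map, map_pow,
    map_constantCoeff_of_isILWSymbol hS, one_pow, coeff_one, if_neg hn]

-- `res L̂₀ⁿ / n!`
def normalizedResidue (S : Q2⟦X⟧) (n : ℕ) : Q2 :=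
  (n.factorial : ℚ)⁻¹ • coeff n (S ^ n)

theorem normalizedResidue_one (hS : IsILWSymbol S) : normalizedResidue S 1 = uQ := by
  simp [normalizedResidue, coeff_succ_of_isILWSymbol hS 0, logPS]

theorem normalizedResidue_succ_succ (hS : IsILWSymbol S) (d : ℕ) :
    normalizedResidue S (d + 2) = intU (normalizedResidue S (d + 1))
      + (((d : ℚ) + 1)⁻¹ • tauQ) * normalizedResidue S (d + 1) := by
  obtain ⟨A, hA⟩ : ∃ A, (S - X * C tauQ) * A = 1 :=
    ⟨_, mul_invOfUnit _ 1 (by simp [hS.1])⟩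
  refine Polynomial.eq_of_derivative_eq_of_coeff_zero_eq ?_ ?_
  · rw [Polynomial.derivative_add, derivative_intU, Polynomial.derivative_mul,
      Polynomial.derivative_smul, show Polynomial.derivative tauQ = 0 from Polynomial.derivative_C,
      smul_zero, zero_mul, zero_add]
    simp only [normalizedResidue, Polynomial.derivative_smul, derivative_coeff_pow_self hS hA,
      coeff_pow_mul_succ_of_mul_eq_one hA, Nat.factorial_succ (d + 1), ← Nat.cast_smul_eq_nsmul ℚ,
      smul_add, smul_smul, smul_mul_assoc, mul_smul_comm]
    match_scalars <;> field_simp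
  · simp [normalizedResidue, coeff_zero_intU, Polynomial.mul_coeff_zero,
      coeff_zero_coeff_pow_of_isILWSymbol hS]

end Symbol

end ILW

/-- For every `d ≥ 0`,
`[t^{d+1}]S^{d+1}/(d+1)! = (∏_{j=1}^{d}(∂ᵤ⁻¹ + τ/j)) u` in `ℚ[u,τ]`. -/
theorem ilw_stmt15 (S : PowerSeries Q2) (hS : IsILWSymbol S) (d : ℕ) :
    (Nat.factorial (d + 1) : ℚ)⁻¹ • PowerSeries.coeff (d + 1) (S ^ (d + 1))
      = iterProd d uQ := by
  change ILW.normalizedResidue S (d + 1) = iterProd d uQ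
  induction d with
  | zero => exact ILW.normalizedResidue_one hS
  | succ d ih => rw [iterProd, ← ih, ILW.normalizedResidue_succ_succ hS]
end
end
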